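/- Let 0 < α < 1 and p, q > 0. Then the following are equivalent: (i) for every n and all n×n positive definite complex matrices A, B, log 𝒜_{α,p}(A,B) ≤ log 𝒜_{α,q}(A,B) in the Loewner order (i.e., 𝒜_{α,p}(A,B) ≤_chao 𝒜_{α,q}(A,B)); (ii) p ≤ q. -/

import Mathlib

open Matrix
open scoped ComplexOrder

/-- Functional calculus for Hermitian matrices: apply `f` to the eigenvalues in a spectral
decomposition (junk value `0` on non-Hermitian matrices). -/
noncomputable def matFun {n : ℕ} (f : ℝ → ℝ) (A : Matrix (Fin n) (Fin n) ℂ) :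
    Matrix (Fin n) (Fin n) ℂ :=
  if hA : A.IsHermitian then hA.cfc f else 0

/-- Matrix power `A ^ r` (`r : ℝ`) by functional calculus. -/
noncomputable def mpow {n : ℕ} (A : Matrix (Fin n) (Fin n) ℂ) (r : ℝ) :
    Matrix (Fin n) (Fin n) ℂ :=
  matFun (fun x => x ^ r) A

/-- Matrix logarithm by functional calculus. -/
noncomputable def mlog {n : ℕ} (A : Matrix (Fin n) (Fin n) ℂ) : Matrix (Fin n) (Fin n) ℂ :=
  matFun Real.log A

/-- Matrix exponential (of a Hermitian matrix) by functional calculus. -/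
noncomputable def mexp {n : ℕ} (A : Matrix (Fin n) (Fin n) ℂ) : Matrix (Fin n) (Fin n) ℂ :=
  matFun Real.exp A

/-- Quasi `α`-weighted arithmetic mean `𝒜_{α,p}(A,B) = ((1-α)A^p + αB^p)^{1/p}`. -/
noncomputable def qam {n : ℕ} (α p : ℝ) (A B : Matrix (Fin n) (Fin n) ℂ) :
    Matrix (Fin n) (Fin n) ℂ :=
  mpow ((1 - α) • mpow A p + α • mpow B p) (1 / p)

/-- `t`-weighted geometric mean `A #_t B = A^{1/2} (A^{-1/2} B A^{-1/2})^t A^{1/2}`. -/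
noncomputable def gmean {n : ℕ} (t : ℝ) (A B : Matrix (Fin n) (Fin n) ℂ) :
    Matrix (Fin n) (Fin n) ℂ :=
  mpow A (1 / 2) * mpow (mpow A (-(1 / 2)) * B * mpow A (-(1 / 2))) t * mpow A (1 / 2)

/-- Quasi `α`-weighted geometric mean `G_{α,p}(A,B) = (A^p #_α B^p)^{1/p}`. -/
noncomputable def qgm {n : ℕ} (α p : ℝ) (A B : Matrix (Fin n) (Fin n) ℂ) :
    Matrix (Fin n) (Fin n) ℂ :=
  mpow (gmean α (mpow A p) (mpow B p)) (1 / p)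

/-- Rényi mean `R_{α,p}(A,B) = (A^{((1-α)/2)p} B^{αp} A^{((1-α)/2)p})^{1/p}`. -/
noncomputable def renyiMean {n : ℕ} (α p : ℝ) (A B : Matrix (Fin n) (Fin n) ℂ) :
    Matrix (Fin n) (Fin n) ℂ :=
  mpow (mpow A ((1 - α) / 2 * p) * mpow B (α * p) * mpow A ((1 - α) / 2 * p)) (1 / p)

/-- `α`-weighted Log-Euclidean mean `LE_α(A,B) = exp((1-α) log A + α log B)`. -/
noncomputable def logEuclid {n : ℕ} (α : ℝ) (A B : Matrix (Fin n) (Fin n) ℂ) :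
    Matrix (Fin n) (Fin n) ℂ :=
  mexp ((1 - α) • mlog A + α • mlog B)

/-- Quasi `α`-weighted spectral geometric mean
`SG_{α,p}(A,B) = ((A^{-p} # B^p)^α A^p (A^{-p} # B^p)^α)^{1/p}` where `# = #_{1/2}`. -/
noncomputable def sgm {n : ℕ} (α p : ℝ) (A B : Matrix (Fin n) (Fin n) ℂ) :
    Matrix (Fin n) (Fin n) ℂ :=
  mpow (mpow (gmean (1 / 2) (mpow A (-p)) (mpow B p)) α * mpow A p *
    mpow (gmean (1 / 2) (mpow A (-p)) (mpow B p)) α) (1 / p)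

/-- Loewner order: `X ≤ Y` iff `Y - X` is positive semidefinite. -/
def Loewner {n : ℕ} (X Y : Matrix (Fin n) (Fin n) ℂ) : Prop := (Y - X).PosSemidef

/-- Eigenvalues of a Hermitian matrix arranged in decreasing order:
`eigsDesc A 0 ≥ eigsDesc A 1 ≥ …` (junk value `0` on non-Hermitian matrices). -/
noncomputable def eigsDesc {n : ℕ} (A : Matrix (Fin n) (Fin n) ℂ) (i : Fin n) : ℝ :=
  if hA : A.IsHermitian then (hA.eigenvalues ∘ Tuple.sort hA.eigenvalues) i.rev else 0

/-!
For `p ≤ q` put `r = p / q ∈ (0, 1]` and `M_t = (1 - α) A ^ t + α B ^ t`. Since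
`A ^ p = (A ^ q) ^ r`, operator concavity of `x ↦ x ^ r` gives `M_p ≤ M_q ^ r`, and operator
monotonicity of `log` gives `log M_p ≤ r log M_q`; dividing by `p` is the claim.
Conversely, for the `1 × 1` matrices `A = 1`, `B = 2` the chaotic order compares the scalar
power means `((1 - α) + α 2 ^ t) ^ (1 / t)`, which strictly increase with `t` by strict convexity
of `x ↦ x ^ (p / q)` for `q < p`.
-/

section CStarAlgebra

open CFC

variable {A : Type*} [CStarAlgebra A] [PartialOrder A] [StarOrderedRing A]

lemma convex_setOf_isStrictlyPositive : Convex ℝ {a : A | IsStrictlyPositive a} := by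
  grind [convex_iff_forall_pos]

lemma CFC.log_rpow (a : A) (t : ℝ) (ha : IsStrictlyPositive a := by cfc_tac) :
    log (a ^ t) = t • log a := by
  have hpos : ∀ x ∈ spectrum ℝ a, 0 < x := fun x hx => by grind
  have hlog : ContinuousOn Real.log (spectrum ℝ a) :=
    Real.continuousOn_log.mono fun x hx => (hpos x hx).ne'
  have hrpow : ContinuousOn (· ^ t) (spectrum ℝ a) :=
    ContinuousOn.rpow_const continuousOn_id fun x hx => .inl (hpos x hx).ne'
  have hlog_rpow : ContinuousOn Real.log ((· ^ t) '' spectrum ℝ a) :=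
    Real.continuousOn_log.mono (by grind [Real.rpow_pos_of_pos])
  rw [rpow_eq_cfc_real ha.nonneg, log, log, ← cfc_comp' Real.log (· ^ t) a hlog_rpow hrpow,
    ← cfc_const_mul t Real.log a hlog]
  exact cfc_congr fun x hx => Real.log_rpow (hpos x hx) t

theorem CFC.smul_log_weightedPowerMean_le {a b : A} (ha : IsStrictlyPositive a)
    (hb : IsStrictlyPositive b) {α p q : ℝ} (hα0 : 0 ≤ α) (hα1 : α ≤ 1) (hp : 0 < p)
    (hpq : p ≤ q) :
    p⁻¹ • log ((1 - α) • a ^ p + α • b ^ p) ≤ q⁻¹ • log ((1 - α) • a ^ q + α • b ^ q) := by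
  have hq : 0 < q := hp.trans_le hpq
  have hmean (t : ℝ) : IsStrictlyPositive ((1 - α) • a ^ t + α • b ^ t) :=
    convex_setOf_isStrictlyPositive (ha.rpow a t) (hb.rpow b t) (by linarith) hα0 (by ring)
  have hconc : (1 - α) • a ^ p + α • b ^ p ≤ ((1 - α) • a ^ q + α • b ^ q) ^ (p / q) := by
    have hpow {c : A} (hc : IsStrictlyPositive c) : c ^ p = (c ^ q) ^ (p / q) := by
      rw [rpow_rpow c q _ hq.ne', mul_div_cancel₀ p hq.ne']
    rw [hpow ha, hpow hb]
    exact (concaveOn_rpow ⟨by positivity, div_le_one_of_le₀ hpq hq.le⟩).2 rpow_nonneg rpow_nonneg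
      (by linarith) hα0 (by ring)
  calc p⁻¹ • log ((1 - α) • a ^ p + α • b ^ p)
      ≤ p⁻¹ • log (((1 - α) • a ^ q + α • b ^ q) ^ (p / q)) :=
        smul_le_smul_of_nonneg_left (log_le_log hconc (hmean p)) (by positivity)
    _ = q⁻¹ • log ((1 - α) • a ^ q + α • b ^ q) := by
        rw [log_rpow _ _ (hmean q), smul_smul]
        congr 1
        field_simp

end CStarAlgebra

theorem Real.weightedPowerMean_lt_of_lt {α x y p q : ℝ} (hα0 : 0 < α) (hα1 : α < 1)
    (hx : 0 ≤ x) (hy : 0 ≤ y) (hxy : x ≠ y) (hq : 0 < q) (hqp : q < p) :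
    ((1 - α) * x ^ q + α * y ^ q) ^ q⁻¹ < ((1 - α) * x ^ p + α * y ^ p) ^ p⁻¹ := by
  have hp : 0 < p := hq.trans hqp
  have hconv : ((1 - α) * x ^ q + α * y ^ q) ^ (p / q) < (1 - α) * x ^ p + α * y ^ p := by
    have := (strictConvexOn_rpow ((one_lt_div hq).2 hqp)).2 (Real.rpow_nonneg hx q)
      (Real.rpow_nonneg hy q) ((Real.rpow_left_injOn hq.ne').ne hx hy hxy)
      (by linarith : (0 : ℝ) < 1 - α) hα0 (by ring)
    simpa only [smul_eq_mul, ← Real.rpow_mul hx, ← Real.rpow_mul hy,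
      mul_div_cancel₀ p hq.ne'] using this
  calc ((1 - α) * x ^ q + α * y ^ q) ^ q⁻¹
      = (((1 - α) * x ^ q + α * y ^ q) ^ (p / q)) ^ p⁻¹ := by
        rw [← Real.rpow_mul (by positivity)]
        congr 1
        field_simp
    _ < ((1 - α) * x ^ p + α * y ^ p) ^ p⁻¹ :=
        Real.rpow_lt_rpow (by positivity) hconv (by positivity)

open scoped MatrixOrder Matrix.Norms.L2Operator

section Matrix

variable {n : ℕ}

lemma loewner_iff_le {X Y : Matrix (Fin n) (Fin n) ℂ} : Loewner X Y ↔ X ≤ Y := Iff.rfl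

lemma Matrix.IsHermitian.matFun_eq_cfc {A : Matrix (Fin n) (Fin n) ℂ} (hA : A.IsHermitian)
    (f : ℝ → ℝ) : matFun f A = cfc f A := by
  rw [matFun, dif_pos hA, hA.cfc_eq]

lemma Matrix.PosDef.mpow_eq_rpow {A : Matrix (Fin n) (Fin n) ℂ} (hA : A.PosDef) (t : ℝ) :
    mpow A t = A ^ t := by
  rw [mpow, hA.isHermitian.matFun_eq_cfc, CFC.rpow_eq_cfc_real hA.posSemidef.nonneg]

lemma Matrix.PosDef.mlog_eq_log {A : Matrix (Fin n) (Fin n) ℂ} (hA : A.PosDef) :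
    mlog A = CFC.log A :=
  hA.isHermitian.matFun_eq_cfc _

lemma Matrix.PosDef.mlog_qam {A B : Matrix (Fin n) (Fin n) ℂ} (hA : A.PosDef) (hB : B.PosDef)
    {α : ℝ} (hα0 : 0 ≤ α) (hα1 : α ≤ 1) (p : ℝ) :
    mlog (qam α p A B) = p⁻¹ • CFC.log ((1 - α) • A ^ p + α • B ^ p) := by
  have hmean : IsStrictlyPositive ((1 - α) • A ^ p + α • B ^ p) :=
    convex_setOf_isStrictlyPositive (hA.isStrictlyPositive.rpow A p)
      (hB.isStrictlyPositive.rpow B p) (by linarith) hα0 (by ring)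
  rw [qam, hA.mpow_eq_rpow, hB.mpow_eq_rpow, hmean.posDef.mpow_eq_rpow,
    (hmean.rpow _ _).posDef.mlog_eq_log, CFC.log_rpow _ _ hmean, one_div]

theorem loewner_mlog_qam_of_le {α p q : ℝ} (hα0 : 0 ≤ α) (hα1 : α ≤ 1) (hp : 0 < p)
    (hpq : p ≤ q) {A B : Matrix (Fin n) (Fin n) ℂ} (hA : A.PosDef) (hB : B.PosDef) :
    Loewner (mlog (qam α p A B)) (mlog (qam α q A B)) := by
  rw [loewner_iff_le, hA.mlog_qam hB hα0 hα1, hA.mlog_qam hB hα0 hα1]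
  exact CFC.smul_log_weightedPowerMean_le hA.isStrictlyPositive hB.isStrictlyPositive hα0 hα1
    hp hpq

lemma matFun_algebraMap (f : ℝ → ℝ) (x : ℝ) :
    matFun f (algebraMap ℝ (Matrix (Fin n) (Fin n) ℂ) x) = algebraMap ℝ _ (f x) := by
  rw [Matrix.IsHermitian.matFun_eq_cfc (IsSelfAdjoint.algebraMap _ (.all x)), cfc_algebraMap]

lemma qam_algebraMap (α t x y : ℝ) :
    qam α t (algebraMap ℝ (Matrix (Fin n) (Fin n) ℂ) x) (algebraMap ℝ _ y) =
      algebraMap ℝ _ (((1 - α) * x ^ t + α * y ^ t) ^ t⁻¹) := by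
  simp only [qam, mpow, matFun_algebraMap, Algebra.smul_def, ← map_mul, ← map_add, one_div]

theorem le_of_forall_loewner_mlog_qam {α p q : ℝ} (hα0 : 0 < α) (hα1 : α < 1) (hq : 0 < q)
    (h : ∀ (n : ℕ) (A B : Matrix (Fin n) (Fin n) ℂ), A.PosDef → B.PosDef →
      Loewner (mlog (qam α p A B)) (mlog (qam α q A B))) : p ≤ q := by
  by_contra! hqp
  have hscalar {x : ℝ} (hx : 0 < x) : (algebraMap ℝ (Matrix (Fin 1) (Fin 1) ℂ) x).PosDef :=
    (isStrictlyPositive_algebraMap hx).posDef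
  have hle := h 1 _ _ (hscalar one_pos) (hscalar two_pos)
  rw [loewner_iff_le, mlog, mlog, qam_algebraMap, qam_algebraMap, matFun_algebraMap,
    matFun_algebraMap, algebraMap_le_algebraMap] at hle
  have hmean_q : 0 < (1 - α) * 1 ^ q + α * 2 ^ q := by
    have : 0 < 1 - α := by linarith
    positivity
  exact not_lt_of_ge hle (Real.log_lt_log (by positivity)
    (Real.weightedPowerMean_lt_of_lt hα0 hα1 zero_le_one zero_le_two (by norm_num) hq hqp))

end Matrix

theorem stmt1 (α p q : ℝ) (hα0 : 0 < α) (hα1 : α < 1) (hp : 0 < p) (hq : 0 < q) :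
    (∀ (n : ℕ) (A B : Matrix (Fin n) (Fin n) ℂ), A.PosDef → B.PosDef →
        Loewner (mlog (qam α p A B)) (mlog (qam α q A B))) ↔ p ≤ q :=
  ⟨le_of_forall_loewner_mlog_qam hα0 hα1 hq, fun hpq _ _ _ hA hB =>
    loewner_mlog_qam_of_le hα0.le hα1.le hp hpq hA hB⟩
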